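/- Let G be a connected graph with n(G) ≥ 2 and let k ≥ 2. Then dim_ms(G ∘ K_k) = n(G)(k−1) if and only if G is multiset distance irregular. -/

import Mathlib

open SimpleGraph

/-- The multiset representation of `u` with respect to `S`: the multiset of
distances from `u` to the vertices of `S`, counted with multiplicity. -/
noncomputable def mrep {V : Type*} (G : SimpleGraph V) (u : V) (S : Finset V) : Multiset ℕ :=
  S.val.map fun w => G.dist u w

/-- `S` is an outer multiset resolving set of `G`: the multiset representations of
the vertices outside `S` are pairwise distinct. -/
def IsOMR {V : Type*} (G : SimpleGraph V) (S : Finset V) : Prop :=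
  ∀ u ∉ S, ∀ v ∉ S, mrep G u S = mrep G v S → u = v

/-- The outer multiset dimension of `G`. -/
noncomputable def dimMS {V : Type*} (G : SimpleGraph V) [Fintype V] : ℕ :=
  sInf {n | ∃ S : Finset V, S.card = n ∧ IsOMR G S}

/-- The diameter of `G`: the largest distance between vertices of `G`. -/
noncomputable def gdiam {V : Type*} (G : SimpleGraph V) [Fintype V] : ℕ :=
  Finset.univ.sup fun p : V × V => G.dist p.1 p.2

/-- The lexicographic product of two simple graphs: `(g, h)` and `(gʹ, hʹ)` are adjacent
iff `g gʹ` is an edge of `G`, or `g = gʹ` and `h hʹ` is an edge of `H`. -/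
def lexProd {α β : Type*} (G : SimpleGraph α) (H : SimpleGraph β) : SimpleGraph (α × β) where
  Adj p q := G.Adj p.1 q.1 ∨ (p.1 = q.1 ∧ H.Adj p.2 q.2)
  symm := ⟨by
    intro p q h
    rcases h with h | ⟨h1, h2⟩
    · exact Or.inl h.symm
    · exact Or.inr ⟨h1.symm, h2.symm⟩⟩
  loopless := ⟨by
    intro p h
    rcases h with h | ⟨_, h2⟩
    · exact G.irrefl h
    · exact H.irrefl h2⟩


/-- `G` is multiset distance irregular if distinct vertices have different multiset
representations with respect to the whole vertex set. -/
def MultisetDistIrregular {V : Type*} (G : SimpleGraph V) [Fintype V] : Prop :=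
  ∀ u v : V, u ≠ v → mrep G u Finset.univ ≠ mrep G v Finset.univ

/-! In `G ∘ K_k` two vertices of one fibre `{g} × K_k` are adjacent and every other vertex is at
the same distance from both, so an outer multiset resolving set leaves at most one vertex of each
fibre outside and has at least `n(G)(k - 1)` elements. A set of exactly that size is the complement
of the graph of a map `f : V(G) → V(K_k)`, and the representation of `(g, f g)` with respect to it
is `k - 1` copies of that of `g` in `G`, with the distance `0` from `g` to itself replaced by `1`.
Cancelling, such a set resolves iff `G` is multiset distance irregular. -/

open Finset

section LexProdDist

variable {V β : Type*} {G : SimpleGraph V} {H : SimpleGraph β}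

lemma dist_fst_le_length_of_lexProd_walk (hG : G.Connected) {p q : V × β}
    (w : (lexProd G H).Walk p q) : G.dist p.1 q.1 ≤ w.length := by
  induction w with
  | nil => simp
  | @cons a b c e w ih =>
    have hab : G.dist a.1 b.1 ≤ 1 := by
      rcases e with hadj | ⟨heq, -⟩
      · exact (dist_eq_one_iff_adj.2 hadj).le
      · simp [heq]
    calc G.dist a.1 c.1 ≤ G.dist a.1 b.1 + G.dist b.1 c.1 := hG.dist_triangle
      _ ≤ (Walk.cons e w).length := by
        rw [Walk.length_cons]
        omega

lemma lexProd_dist_of_fst_ne (hG : G.Connected) {g g' : V} (hg : g ≠ g') (h h' : β) :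
    (lexProd G H).dist (g, h) (g', h') = G.dist g g' := by
  obtain ⟨p, hp⟩ := hG.exists_walk_length_eq_dist g g'
  cases p with
  | nil => exact absurd rfl hg
  | @cons _ c _ e q =>
    -- The first edge of a geodesic leaves the fibre of `g`; the rest runs in the fibre of `h'`.
    let incl : G →g lexProd G H := ⟨(·, h'), Or.inl⟩
    let w : (lexProd G H).Walk (g, h) (g', h') := .cons (Or.inl e : (lexProd G H).Adj _ (c, h'))
      (q.map incl)
    refine le_antisymm ?_ ?_
    · calc (lexProd G H).dist (g, h) (g', h') ≤ w.length := dist_le w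
        _ = G.dist g g' := by rw [← hp]; exact congrArg (· + 1) (Walk.length_map incl q)
    · obtain ⟨r, hr⟩ := (Walk.reachable w).exists_walk_length_eq_dist
      exact hr ▸ dist_fst_le_length_of_lexProd_walk hG r

lemma lexProd_dist_of_adj_snd {h h' : β} (hh : H.Adj h h') (g : V) :
    (lexProd G H).dist (g, h) (g, h') = 1 :=
  dist_eq_one_iff_adj.2 (Or.inr ⟨rfl, hh⟩)

end LexProdDist

section MultisetRepresentation

variable {V : Type*} (G : SimpleGraph V)

lemma mrep_eq_sum (u : V) (S : Finset V) : mrep G u S = ∑ w ∈ S, {G.dist u w} := by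
  rw [Finset.sum, mrep, ← Multiset.sum_map_singleton (S.val.map _), Multiset.map_map]
  rfl

lemma mrep_univ [Fintype V] [DecidableEq V] (g : V) :
    mrep G g univ = 0 ::ₘ mrep G g (univ.erase g) := by
  rw [mrep_eq_sum, mrep_eq_sum, ← add_sum_erase _ _ (mem_univ g), dist_self,
    Multiset.singleton_add]

variable {G}

lemma isOMR_univ [Fintype V] : IsOMR G univ :=
  fun u hu => absurd (mem_univ u) hu

lemma IsOMR.eq_of_forall_dist_eq {S : Finset V} (hS : IsOMR G S) {u v : V} (hu : u ∉ S)
    (hv : v ∉ S) (h : ∀ w ∈ S, G.dist u w = G.dist v w) : u = v :=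
  hS u hu v hv (Multiset.map_congr rfl h)

lemma dimMS_eq_iff_exists [Fintype V] {m : ℕ} (hmin : ∀ S, IsOMR G S → m ≤ S.card) :
    dimMS G = m ↔ ∃ S : Finset V, S.card = m ∧ IsOMR G S := by
  have hne : {n | ∃ S : Finset V, S.card = n ∧ IsOMR G S}.Nonempty :=
    ⟨_, univ, rfl, isOMR_univ⟩
  constructor
  · rintro rfl
    exact Nat.sInf_mem hne
  · intro hm
    refine le_antisymm (Nat.sInf_le hm) (le_csInf hne ?_)
    rintro _ ⟨S, rfl, hS⟩
    exact hmin S hS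

end MultisetRepresentation

section LexProdTop

variable {V β : Type*} {G : SimpleGraph V}

lemma IsOMR.injOn_fst_compl_lexProd_top (hG : G.Connected) {S : Finset (V × β)}
    (hS : IsOMR (lexProd G ⊤) S) : Set.InjOn Prod.fst (↑S : Set (V × β))ᶜ := by
  rintro ⟨g, h⟩ hu ⟨g', h'⟩ hv (rfl : g = g')
  simp only [Set.mem_compl_iff, mem_coe] at hu hv
  refine hS.eq_of_forall_dist_eq hu hv fun ⟨a, b⟩ hw => ?_
  by_cases hag : a = g
  · subst hag
    have hne : ∀ c, (a, c) ∉ S → c ≠ b := fun c hc hcb => hc (hcb ▸ hw)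
    rw [lexProd_dist_of_adj_snd ((top_adj _ _).2 (hne h hu)),
      lexProd_dist_of_adj_snd ((top_adj _ _).2 (hne h' hv))]
  · rw [lexProd_dist_of_fst_ne hG (Ne.symm hag), lexProd_dist_of_fst_ne hG (Ne.symm hag)]

variable [Fintype V] [Fintype β] [DecidableEq β]

def offGraph (f : V → β) : Finset (V × β) := {p | p.2 ≠ f p.1}

lemma mem_offGraph {f : V → β} {p : V × β} : p ∈ offGraph f ↔ p.2 ≠ f p.1 := by
  simp [offGraph]

lemma card_offGraph (f : V → β) :
    (offGraph f).card = Fintype.card V * (Fintype.card β - 1) := by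
  rw [offGraph, card_filter, Fintype.sum_prod_type, ← smul_eq_mul, ← card_univ, ← sum_const]
  refine sum_congr rfl fun g _ => ?_
  rw [← card_filter, filter_ne' univ (f g), card_erase_of_mem (mem_univ _), card_univ]

lemma mrep_lexProd_top_offGraph [DecidableEq V] (hG : G.Connected) (f : V → β) (g : V) :
    mrep (lexProd G ⊤) (g, f g) (offGraph f) =
      (Fintype.card β - 1) • (1 ::ₘ mrep G g (univ.erase g)) := by
  have hfibre : ∀ a, ∑ b ∈ univ.erase (f a), {(lexProd G ⊤).dist (g, f g) (a, b)} =
      (Fintype.card β - 1) • ({if a = g then 1 else G.dist g a} : Multiset ℕ) := by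
    intro a
    rw [← card_univ, ← card_erase_of_mem (mem_univ (f a)), ← sum_const]
    refine sum_congr rfl fun b hb => ?_
    split_ifs with hag
    · subst hag
      rw [lexProd_dist_of_adj_snd ((top_adj _ _).2 (ne_of_mem_erase hb).symm)]
    · rw [lexProd_dist_of_fst_ne hG (Ne.symm hag)]
  rw [mrep_eq_sum, offGraph, sum_filter, Fintype.sum_prod_type]
  simp_rw [← sum_filter, filter_ne' (univ : Finset β), hfibre, ← smul_sum]
  rw [← add_sum_erase _ _ (mem_univ g), if_pos rfl, mrep_eq_sum, Multiset.singleton_add]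
  congr 2
  exact sum_congr rfl fun a ha => by rw [if_neg (ne_of_mem_erase ha)]

lemma mrep_lexProd_top_offGraph_eq_iff (hG : G.Connected) (hβ : 2 ≤ Fintype.card β)
    (f : V → β) (g g' : V) :
    mrep (lexProd G ⊤) (g, f g) (offGraph f) = mrep (lexProd G ⊤) (g', f g') (offGraph f) ↔
      mrep G g univ = mrep G g' univ := by
  classical
  rw [mrep_lexProd_top_offGraph hG, mrep_lexProd_top_offGraph hG, mrep_univ, mrep_univ,
    (nsmul_right_injective (by omega)).eq_iff, Multiset.cons_inj_right, Multiset.cons_inj_right]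

lemma isOMR_offGraph_iff (hG : G.Connected) (hβ : 2 ≤ Fintype.card β) (f : V → β) :
    IsOMR (lexProd G ⊤) (offGraph f) ↔ MultisetDistIrregular G := by
  have hout : ∀ g, (g, f g) ∉ offGraph f := fun g => by simp [mem_offGraph]
  constructor
  · intro hS g g' hne heq
    exact hne (congrArg Prod.fst <| hS _ (hout g) _ (hout g')
      ((mrep_lexProd_top_offGraph_eq_iff hG hβ f g g').2 heq))
  · rintro hirr ⟨g, h⟩ hu ⟨g', h'⟩ hv heq
    simp only [mem_offGraph, ne_eq, not_not] at hu hv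
    subst hu hv
    rw [mrep_lexProd_top_offGraph_eq_iff hG hβ] at heq
    by_contra hne
    exact hirr g g' (fun h => hne (h ▸ rfl)) heq

lemma card_compl_le_of_isOMR_lexProd_top [DecidableEq V] (hG : G.Connected) {S : Finset (V × β)}
    (hS : IsOMR (lexProd G ⊤) S) : Sᶜ.card ≤ Fintype.card V :=
  card_le_card_of_injOn Prod.fst (fun _ _ => mem_univ _)
    (by rw [coe_compl]; exact hS.injOn_fst_compl_lexProd_top hG)

lemma card_le_card_of_isOMR_lexProd_top (hG : G.Connected) {S : Finset (V × β)}
    (hS : IsOMR (lexProd G ⊤) S) : Fintype.card V * (Fintype.card β - 1) ≤ S.card := by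
  classical
  have hsum := card_add_card_compl S
  have hcompl := card_compl_le_of_isOMR_lexProd_top hG hS
  rw [Fintype.card_prod] at hsum
  rw [Nat.mul_sub_one]
  omega

lemma IsOMR.exists_eq_offGraph [Nonempty β] (hG : G.Connected) {S : Finset (V × β)}
    (hS : IsOMR (lexProd G ⊤) S) (hcard : S.card = Fintype.card V * (Fintype.card β - 1)) :
    ∃ f : V → β, S = offGraph f := by
  classical
  have hinj := hS.injOn_fst_compl_lexProd_top hG
  have hcompl : Sᶜ.card = Fintype.card V := by
    have hsum := card_add_card_compl S
    have hle := card_compl_le_of_isOMR_lexProd_top hG hS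
    have hpos : Fintype.card V ≤ Fintype.card V * Fintype.card β :=
      Nat.le_mul_of_pos_right _ Fintype.card_pos
    rw [Fintype.card_prod, hcard, Nat.mul_sub_one] at hsum
    omega
  have himage : Sᶜ.image Prod.fst = univ :=
    eq_univ_of_card _ (by rw [card_image_of_injOn (by rwa [coe_compl]), hcompl])
  have hsection : ∀ g, ∃ h, (g, h) ∉ S := fun g => by
    obtain ⟨p, hp, rfl⟩ := mem_image.1 (himage ▸ mem_univ g)
    exact ⟨p.2, mem_compl.1 hp⟩
  choose f hf using hsection
  refine ⟨f, ext fun p => ⟨fun hp => mem_offGraph.2 fun heq => hf p.1 (by rwa [← heq]),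
    fun hp => ?_⟩⟩
  by_contra hpS
  exact mem_offGraph.1 hp (congrArg Prod.snd (hinj hpS (hf p.1) rfl))

end LexProdTop

theorem stmt_13_general (V : Type*) [Fintype V] (G : SimpleGraph V)
    (hconn : G.Connected) (k : ℕ) (hk : 2 ≤ k) :
    dimMS (lexProd G (⊤ : SimpleGraph (Fin k))) = Fintype.card V * (k - 1) ↔
      MultisetDistIrregular G := by
  have hcard : 2 ≤ Fintype.card (Fin k) := by simpa using hk
  have : Nonempty (Fin k) := ⟨⟨0, by omega⟩⟩
  have hmin : ∀ S : Finset (V × Fin k), IsOMR (lexProd G ⊤) S →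
      Fintype.card V * (k - 1) ≤ S.card := fun S hS => by
    simpa using card_le_card_of_isOMR_lexProd_top hconn hS
  rw [dimMS_eq_iff_exists hmin]
  constructor
  · rintro ⟨S, hS_card, hS⟩
    obtain ⟨f, rfl⟩ := hS.exists_eq_offGraph hconn (by simpa using hS_card)
    exact (isOMR_offGraph_iff hconn hcard f).1 hS
  · intro hirr
    let f : V → Fin k := Function.const V (Classical.arbitrary _)
    exact ⟨offGraph f, by simpa using card_offGraph f,
      (isOMR_offGraph_iff hconn hcard f).2 hirr⟩

theorem stmt_13 (V : Type*) [Fintype V] (G : SimpleGraph V)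
    (hconn : G.Connected) (hn : 2 ≤ Fintype.card V) (k : ℕ) (hk : 2 ≤ k) :
    dimMS (lexProd G (⊤ : SimpleGraph (Fin k))) = Fintype.card V * (k - 1) ↔
      MultisetDistIrregular G :=
  stmt_13_general V G hconn k hk
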